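/- arXiv:2105.01963 — 2 statements merged into one kernel-verified Lean document; each statement's English description precedes it below -/
import Mathlib

section
/- For n even, the Möbius sparsity of the Odd-Max-Bit function OMB_n equals n; for n odd it equals n+1. Concretely, the Möbius support of OMB_n equals {{j, j+1, ..., n} : 1 ≤ j ≤ n} when n is even, and {{j, j+1, ..., n} : 1 ≤ j ≤ n} ∪ {∅} when n is odd. -/
/-- `AND_S(x) = ∏_{i ∈ S} x_i` as a real number. -/
def andR {n : ℕ} (S : Finset (Fin n)) (x : Fin n → Bool) : ℝ :=
  ∏ i ∈ S, (if x i then (1 : ℝ) else 0)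

/-- The Odd-Max-Bit function: `1` iff the maximal (1-indexed) position holding a `0` is odd,
and `0` on the all-ones input. -/
def OMB (n : ℕ) (x : Fin n → Bool) : Bool :=
  decide (∃ i : Fin n, x i = false ∧ (i.val + 1) % 2 = 1 ∧ ∀ j : Fin n, i < j → x j = true)

/-!
Let `m(x)` be the (1-indexed) position of the last zero of `x`, with `m(1ⁿ) = 0`, so that
`OMB_n(x) = [m(x) odd]`. The monomial on the suffix `{j+1, …, n}` is `[m(x) ≤ j]`, and since
`(-1)^(j+1) = [j odd] - [j+1 odd]`, the sum `∑_{j<n} (-1)^(j+1) [m(x) ≤ j]` telescopes to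
`[m(x) odd] - [n odd]`. Hence `OMB_n = [n odd] + ∑_{j<n} (-1)^(j+1) AND_{j+1..n}`. Möbius
coefficients are unique: evaluating at the indicator of `T` gives `∑_{S ⊆ T} c S`, from which `c`
is recovered by strong induction on `T`.
-/

lemma Finset.eq_zero_of_sum_powerset_eq_zero {α M : Type*} [DecidableEq α] [AddCommGroup M]
    {e : Finset α → M} (h : ∀ T : Finset α, ∑ S ∈ T.powerset, e S = 0) : e = 0 := by
  funext T
  induction T using Finset.strongInduction with
  | _ T ih =>
    have hsub : ∑ S ∈ T.powerset.erase T, e S = 0 :=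
      Finset.sum_eq_zero fun S hS => ih S (Finset.mem_ssubsets.1 hS)
    simpa [hsub] using (Finset.add_sum_erase _ e (Finset.mem_powerset_self T)).trans (h T)

lemma neg_one_pow_succ_eq_sub (j : ℕ) :
    (-1 : ℝ) ^ (j + 1) = (if Odd j then 1 else 0) - (if Odd (j + 1) then 1 else 0) := by
  rcases Nat.even_or_odd j with hj | hj
  · simp [hj.add_one, Nat.not_odd_iff_even.2 hj]
  · simp [hj, Nat.odd_add_one]

lemma sum_range_neg_one_pow_mul_ite_le {m n : ℕ} (hmn : m ≤ n) :
    ∑ j ∈ Finset.range n, (-1 : ℝ) ^ (j + 1) * (if m ≤ j then 1 else 0) =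
      (if Odd m then 1 else 0) - (if Odd n then 1 else 0) := by
  let g : ℕ → ℝ := fun j => if Odd (max m j) then 1 else 0
  have hstep : ∀ j, (-1 : ℝ) ^ (j + 1) * (if m ≤ j then 1 else 0) = g j - g (j + 1) := by
    intro j
    by_cases hmj : m ≤ j
    · simp [g, hmj, hmj.trans j.le_succ, neg_one_pow_succ_eq_sub]
    · simp [g, hmj, show max m (j + 1) = m by omega, le_of_not_ge hmj]
  simp only [hstep, Finset.sum_range_sub', g, max_eq_left m.zero_le, max_eq_right hmn]

section Mobius

variable {n : ℕ}

lemma andR_eq_ite (S : Finset (Fin n)) (x : Fin n → Bool) :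
    andR S x = if ∀ i ∈ S, x i = true then 1 else 0 := by
  rw [andR, Finset.prod_boole]
  congr

lemma andR_indicator (S T : Finset (Fin n)) :
    andR S (fun i => decide (i ∈ T)) = if S ⊆ T then 1 else 0 := by
  simp only [andR_eq_ite, decide_eq_true_eq, Finset.subset_iff]

lemma sum_mul_andR_indicator (e : Finset (Fin n) → ℝ) (T : Finset (Fin n)) :
    ∑ S, e S * andR S (fun i => decide (i ∈ T)) = ∑ S ∈ T.powerset, e S := by
  simp only [andR_indicator, mul_ite, mul_one, mul_zero, ← Finset.sum_filter]
  congr 1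
  ext S
  simp

theorem eq_of_forall_sum_mul_andR_eq {c d : Finset (Fin n) → ℝ}
    (h : ∀ x, ∑ S, c S * andR S x = ∑ S, d S * andR S x) : c = d := by
  refine sub_eq_zero.1 (Finset.eq_zero_of_sum_powerset_eq_zero fun T => ?_)
  simp only [Pi.sub_apply, Finset.sum_sub_distrib]
  rw [← sum_mul_andR_indicator, ← sum_mul_andR_indicator, h, sub_self]

end Mobius

namespace OddMaxBit

variable {n : ℕ}

-- In 1-indexed terms, `suffix n j = {j+1, …, n}`.
def suffix (n j : ℕ) : Finset (Fin n) := Finset.univ.filter fun i : Fin n => j ≤ i.val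

lemma mem_suffix {j : ℕ} {i : Fin n} : i ∈ suffix n j ↔ j ≤ i.val := by
  simp [suffix]

lemma suffix_nonempty {j : ℕ} (hj : j < n) : (suffix n j).Nonempty :=
  ⟨⟨j, hj⟩, mem_suffix.2 le_rfl⟩

lemma suffix_injOn : Set.InjOn (suffix n) (Set.Iio n) := by
  intro j₁ h₁ j₂ h₂ h
  have h₁₂ : j₂ ≤ j₁ := mem_suffix.1 (h ▸ mem_suffix.2 le_rfl : (⟨j₁, h₁⟩ : Fin n) ∈ suffix n j₂)
  have h₂₁ : j₁ ≤ j₂ := mem_suffix.1 (h ▸ mem_suffix.2 le_rfl : (⟨j₂, h₂⟩ : Fin n) ∈ suffix n j₁)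
  omega

lemma ncard_setOf_eq_suffix : {S | ∃ j < n, S = suffix n j}.ncard = n := by
  have : {S | ∃ j < n, S = suffix n j} = suffix n '' Set.Iio n := by
    ext S
    simp [eq_comm]
  rw [this, suffix_injOn.ncard_image, ← Finset.coe_range, Set.ncard_coe_finset, Finset.card_range]

/-- The 1-indexed position of the last `false` in `x`, or `0` if there is none. -/
def lastZero (x : Fin n → Bool) : ℕ :=
  (Finset.univ.filter fun i => x i = false).sup fun i => i.val + 1

lemma lastZero_le (x : Fin n → Bool) : lastZero x ≤ n :=
  Finset.sup_le fun i _ => i.isLt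

lemma lastZero_le_iff {x : Fin n → Bool} {j : ℕ} :
    lastZero x ≤ j ↔ ∀ i : Fin n, j ≤ i.val → x i = true := by
  simp only [lastZero, Finset.sup_le_iff, Finset.mem_filter, Finset.mem_univ, true_and]
  refine forall_congr' fun i => ?_
  cases x i <;> simp

lemma lastZero_eq_succ_iff {x : Fin n → Bool} {i : Fin n} :
    lastZero x = i.val + 1 ↔ x i = false ∧ ∀ j, i < j → x j = true := by
  have : lastZero x = i.val + 1 ↔ lastZero x ≤ i.val + 1 ∧ ¬lastZero x ≤ i.val := by omega
  simp only [this, lastZero_le_iff, Nat.succ_le_iff, ← Fin.lt_def, not_forall,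
    Bool.not_eq_true, exists_prop]
  constructor
  · rintro ⟨hafter, k, hik, hk⟩
    obtain rfl : k = i := by
      by_contra hne
      simp [hafter k (lt_of_le_of_ne hik (Ne.symm hne))] at hk
    exact ⟨hk, hafter⟩
  · rintro ⟨hi, hafter⟩
    exact ⟨hafter, i, le_rfl, hi⟩

lemma OMB_eq_decide_odd (x : Fin n → Bool) : OMB n x = decide (Odd (lastZero x)) := by
  refine decide_eq_decide.2 ⟨?_, fun hodd => ?_⟩
  · rintro ⟨i, hi, hodd, hafter⟩
    rw [lastZero_eq_succ_iff.2 ⟨hi, hafter⟩]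
    exact Nat.odd_iff.2 hodd
  · have hpos := hodd.pos
    obtain ⟨i, hi⟩ : ∃ i : Fin n, lastZero x = i.val + 1 :=
      ⟨⟨lastZero x - 1, by have := lastZero_le x; omega⟩, by simp only; omega⟩
    obtain ⟨hzero, hafter⟩ := lastZero_eq_succ_iff.1 hi
    exact ⟨i, hzero, Nat.odd_iff.1 (hi ▸ hodd), hafter⟩

lemma andR_suffix (x : Fin n → Bool) (j : ℕ) :
    andR (suffix n j) x = if lastZero x ≤ j then 1 else 0 := by
  simp only [andR_eq_ite, mem_suffix, lastZero_le_iff]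

noncomputable def coeff (n : ℕ) (S : Finset (Fin n)) : ℝ :=
  (if S = ∅ then (if Odd n then 1 else 0) else 0) +
    ∑ j ∈ Finset.range n, if S = suffix n j then (-1) ^ (j + 1) else 0

lemma sum_coeff_mul_andR (x : Fin n → Bool) :
    ∑ S, coeff n S * andR S x =
      (if Odd n then 1 else 0) + ∑ j ∈ Finset.range n, (-1) ^ (j + 1) * andR (suffix n j) x := by
  simp only [coeff, add_mul, Finset.sum_add_distrib, Finset.sum_mul, ite_mul, zero_mul]
  rw [Finset.sum_comm]
  simp [andR]

theorem OMB_eq_sum_coeff_mul_andR (x : Fin n → Bool) :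
    (if OMB n x then (1 : ℝ) else 0) = ∑ S, coeff n S * andR S x := by
  simp only [sum_coeff_mul_andR, andR_suffix, sum_range_neg_one_pow_mul_ite_le (lastZero_le x),
    OMB_eq_decide_odd, decide_eq_true_eq]
  ring

lemma coeff_suffix {j : ℕ} (hj : j < n) : coeff n (suffix n j) = (-1) ^ (j + 1) := by
  rw [coeff, if_neg (suffix_nonempty hj).ne_empty, zero_add,
    Finset.sum_eq_single_of_mem j (Finset.mem_range.2 hj) fun k hk hkj =>
      if_neg fun h => hkj (suffix_injOn (Finset.mem_range.1 hk) hj h.symm),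
    if_pos rfl]

lemma coeff_ne_zero_iff {S : Finset (Fin n)} :
    coeff n S ≠ 0 ↔ (S = ∅ ∧ Odd n) ∨ ∃ j < n, S = suffix n j := by
  by_cases hS : ∃ j < n, S = suffix n j
  · obtain ⟨j, hj, rfl⟩ := hS
    simpa [coeff_suffix hj] using Or.inr ⟨j, hj, rfl⟩
  · have hsum : ∑ j ∈ Finset.range n, (if S = suffix n j then (-1 : ℝ) ^ (j + 1) else 0) = 0 :=
      Finset.sum_eq_zero fun j hj => if_neg fun h => hS ⟨j, Finset.mem_range.1 hj, h⟩
    simp only [coeff, hsum, add_zero, hS, or_false]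
    split_ifs <;> simp [*]

end OddMaxBit

theorem stmt5_general (n : ℕ) (c : Finset (Fin n) → ℝ)
    (hf : ∀ x, (if OMB n x then (1 : ℝ) else 0) = ∑ S : Finset (Fin n), c S * andR S x) :
    (Even n →
      ({S | c S ≠ 0} =
        {S | ∃ j < n, S = Finset.univ.filter (fun i : Fin n => j ≤ i.val)} ∧
      {S | c S ≠ 0}.ncard = n)) ∧
    (Odd n →
      ({S | c S ≠ 0} =
        insert ∅ {S | ∃ j < n, S = Finset.univ.filter (fun i : Fin n => j ≤ i.val)} ∧
      {S | c S ≠ 0}.ncard = n + 1)) := by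
  open OddMaxBit in
  obtain rfl : c = coeff n :=
    eq_of_forall_sum_mul_andR_eq fun x => (hf x).symm.trans (OMB_eq_sum_coeff_mul_andR x)
  have hsuffixes : {S | ∃ j < n, S = Finset.univ.filter (fun i : Fin n => j ≤ i.val)} =
      {S | ∃ j < n, S = suffix n j} := rfl
  rw [hsuffixes]
  refine ⟨fun he => ?_, fun ho => ?_⟩
  · have hsupp : {S | coeff n S ≠ 0} = {S | ∃ j < n, S = suffix n j} := by
      ext S
      simp [coeff_ne_zero_iff, Nat.not_odd_iff_even.2 he]
    exact ⟨hsupp, hsupp ▸ ncard_setOf_eq_suffix⟩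
  · have hsupp : {S | coeff n S ≠ 0} = insert ∅ {S | ∃ j < n, S = suffix n j} := by
      ext S
      simp [coeff_ne_zero_iff, ho]
    have hempty : ∅ ∉ {S | ∃ j < n, S = suffix n j} := fun ⟨j, hj, h⟩ =>
      (suffix_nonempty hj).ne_empty h.symm
    exact ⟨hsupp, by rw [hsupp, Set.ncard_insert_of_notMem hempty, ncard_setOf_eq_suffix]⟩

/-- The Möbius support of `OMB_n` consists exactly of the suffix sets `{j,…,n}` for
`j ∈ [n]` (together with `∅` when `n` is odd); consequently its Möbius sparsity is `n`
for even `n` and `n+1` for odd `n`. -/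
theorem stmt5 (n : ℕ) (hn : 0 < n) (c : Finset (Fin n) → ℝ)
    (hf : ∀ x, (if OMB n x then (1 : ℝ) else 0) = ∑ S : Finset (Fin n), c S * andR S x) :
    (Even n →
      ({S | c S ≠ 0} =
        {S | ∃ j < n, S = Finset.univ.filter (fun i : Fin n => j ≤ i.val)} ∧
      {S | c S ≠ 0}.ncard = n)) ∧
    (Odd n →
      ({S | c S ≠ 0} =
        insert ∅ {S | ∃ j < n, S = Finset.univ.filter (fun i : Fin n => j ≤ i.val)} ∧
      {S | c S ≠ 0}.ncard = n + 1)) :=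
  stmt5_general n c hf
end

section
/- Let f : {0,1}^n → {0,1} be a Boolean function and let {S_1, ..., S_k} be an NAADT basis for f. Then every set W in the Möbius support of f equals ⋃_{i ∈ T} S_i for some T ⊆ [k]; equivalently, every monomial AND_W in the Möbius expansion of f is a product Π_{i∈T} AND_{S_i}. -/
/-- `AND_S(x)` as a Boolean. -/
def andB {n : ℕ} (S : Finset (Fin n)) (x : Fin n → Bool) : Bool :=
  decide (∀ i ∈ S, x i = true)

/-!
Evaluate `f` on indicator vectors `1_V`: the expansion says `f(1_V) = ∑_{U ⊆ V} c U`.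
If `W` is not a union of basis sets, some `w ∈ W` lies in no basis set contained in `W`.
Then adding `w` to any `X ⊆ W \ {w}` does not change which basis ANDs fire, so
`f(1_{X ∪ {w}}) = f(1_X)`, i.e. `∑_{U ⊆ X} c (U ∪ {w}) = 0` for all such `X`.
Triangularity of these subset sums forces `c (U ∪ {w}) = 0` for all `U ⊆ W \ {w}`,
in particular `c W = 0`.
-/

open Finset

theorem Finset.eq_zero_of_forall_sum_powerset_eq_zero {α M : Type*} [DecidableEq α]
    [AddCommGroup M] {d : Finset α → M} {A : Finset α}
    (h : ∀ X ⊆ A, ∑ U ∈ X.powerset, d U = 0) : ∀ X ⊆ A, d X = 0 := by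
  intro X
  induction X using Finset.strongInduction with
  | H X ih =>
    intro hXA
    have hproper : ∑ U ∈ X.ssubsets, d U = 0 :=
      sum_eq_zero fun U hU ↦ ih U (mem_ssubsets.mp hU) ((mem_ssubsets.mp hU).subset.trans hXA)
    have hsplit := add_sum_erase X.powerset d (mem_powerset_self X)
    rwa [← ssubsets, hproper, add_zero, h X hXA] at hsplit

theorem Finset.exists_mem_forall_notMem_of_forall_ne_sup {α : Type*} [DecidableEq α]
    (𝒮 : Finset (Finset α)) (W : Finset α) (hW : ∀ T ⊆ 𝒮, W ≠ T.sup id) :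
    ∃ w ∈ W, ∀ S ∈ 𝒮, S ⊆ W → w ∉ S := by
  by_contra! hcover
  refine hW (𝒮.filter (· ⊆ W)) (filter_subset _ _) (subset_antisymm ?_ ?_)
  · intro w hw
    obtain ⟨S, hS, hSW, hwS⟩ := hcover w hw
    exact mem_sup.mpr ⟨S, mem_filter.mpr ⟨hS, hSW⟩, hwS⟩
  · exact Finset.sup_le fun S hS ↦ (mem_filter.mp hS).2

section Indicator

variable {n : ℕ}

def boolIndicator (V : Finset (Fin n)) : Fin n → Bool := fun i ↦ decide (i ∈ V)

theorem andR_boolIndicator (U V : Finset (Fin n)) :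
    andR U (boolIndicator V) = if U ⊆ V then 1 else 0 := by
  split_ifs with hUV
  · exact prod_eq_one fun i hi ↦ by simp [boolIndicator, hUV hi]
  · obtain ⟨i, hiU, hiV⟩ := not_subset.mp hUV
    exact prod_eq_zero hiU (by simp [boolIndicator, hiV])

theorem andB_boolIndicator (S V : Finset (Fin n)) :
    andB S (boolIndicator V) = decide (S ⊆ V) := by
  simp [andB, boolIndicator, subset_iff]

theorem sum_mul_andR_boolIndicator (c : Finset (Fin n) → ℝ) (V : Finset (Fin n)) :
    ∑ S : Finset (Fin n), c S * andR S (boolIndicator V) = ∑ U ∈ V.powerset, c U := by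
  simp only [andR_boolIndicator, mul_ite, mul_one, mul_zero]
  rw [← sum_filter, filter_subset_univ]

end Indicator

/-- If `𝒮` is an NAADT basis for a Boolean function `f`, then every set in the Möbius
support of `f` is a union of sets from `𝒮`. -/
theorem stmt8 (n : ℕ) (f : (Fin n → Bool) → Bool) (c : Finset (Fin n) → ℝ)
    (hf : ∀ x, (if f x then (1 : ℝ) else 0) = ∑ S : Finset (Fin n), c S * andR S x)
    (𝒮 : Finset (Finset (Fin n)))
    (hbasis : ∀ x y : Fin n → Bool, (∀ S ∈ 𝒮, andB S x = andB S y) → f x = f y) :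
    ∀ W : Finset (Fin n), c W ≠ 0 → ∃ T ⊆ 𝒮, W = T.sup id := by
  intro W hW
  by_contra! hne
  obtain ⟨w, hwW, hw⟩ := exists_mem_forall_notMem_of_forall_ne_sup 𝒮 W hne
  have hzeta (V : Finset (Fin n)) :
      (if f (boolIndicator V) then (1 : ℝ) else 0) = ∑ U ∈ V.powerset, c U := by
    rw [hf, sum_mul_andR_boolIndicator]
  have hdiff : ∀ X ⊆ W.erase w, ∑ U ∈ X.powerset, c (insert w U) = 0 := by
    intro X hX
    have hwX : w ∉ X := fun h ↦ notMem_erase w W (hX h)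
    have hXW : insert w X ⊆ W := insert_subset hwW (hX.trans (erase_subset w W))
    have hf_insert : f (boolIndicator (insert w X)) = f (boolIndicator X) := by
      refine hbasis _ _ fun S hS ↦ ?_
      rw [andB_boolIndicator, andB_boolIndicator, decide_eq_decide]
      exact ⟨fun h ↦ (subset_insert_iff_of_notMem (hw S hS (h.trans hXW))).mp h,
        fun h ↦ h.trans (subset_insert w X)⟩
    have := hzeta (insert w X)
    rw [hf_insert, hzeta X, sum_powerset_insert hwX] at this
    linarith
  have := eq_zero_of_forall_sum_powerset_eq_zero hdiff (W.erase w) subset_rfl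
  exact hW (by rwa [insert_erase hwW] at this)
end
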